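/- arXiv:1005.5503 — 3 statements merged into one kernel-verified Lean document; each statement's English description precedes it below -/
import Mathlib

section
/- Let G be a finite group with Sylow p-subgroup P. If the normalizer N_G(P) is p-nilpotent (has a normal p-complement), then for every subgroup Q with P' ≤ Q ≤ Φ(P) (derived subgroup and Frattini subgroup of P), the normalizer N_G(Q) is p-nilpotent. -/
/-!
Let `H = N_G(Q)`. As `P' ≤ Q ≤ P`, the Sylow subgroup `P` normalizes `Q`, so it is a Sylow
subgroup of `H`. The normal Sylow subgroup `P` of the `p`-nilpotent group `N_G(P)` has a normal
complement, which centralizes it, so `N_G(P)` acts trivially on `P / P'` and hence on `P / Q`.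
Thus in `H / Q` the normalizer of the Sylow subgroup `P / Q` centralizes it, and Burnside's transfer
theorem makes `H / Q` `p`-nilpotent. Let `L ⊴ H` be the preimage of its normal `p`-complement. By
Schur–Zassenhaus, `Q` has a complement `M` in `L`, and all such complements are conjugate in `L`,
so the Frattini argument gives `H = Q · N_H(M)`. By the modular law `P = Q · (P ∩ N_H(M))`, and
since `Q ≤ Φ(P)` this forces `P ≤ N_H(M)`. Hence `M ⊴ H`, and `M` is a normal `p`-complement of
`H`.
-/

/-- A group is `p`-nilpotent if it has a normal `p`-complement, i.e. a normal
subgroup that is a complement to some Sylow `p`-subgroup. -/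
def IsPNilpotent (p : ℕ) (G : Type*) [Group G] : Prop :=
  ∃ (P : Sylow p G) (K : Subgroup G), K.Normal ∧ Subgroup.IsComplement' (P : Subgroup G) K

open Subgroup
open scoped Pointwise commutatorElement

namespace Subgroup

variable {G G' : Type*} [Group G] [Group G']

theorem isComplement'_iff_disjoint_and_sup_eq_top {N K : Subgroup G} [N.Normal] :
    IsComplement' N K ↔ Disjoint N K ∧ N ⊔ K = ⊤ := by
  refine ⟨fun h ↦ ⟨h.disjoint, h.sup_eq_top⟩, fun ⟨hd, hs⟩ ↦ ?_⟩
  refine isComplement'_of_disjoint_and_mul_eq_univ hd ?_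
  rw [← normal_mul, hs, coe_top]

theorem IsComplement'.eq_of_le [Finite G] {N K₁ K₂ : Subgroup G}
    (h₁ : IsComplement' N K₁) (h₂ : IsComplement' N K₂) (hle : K₁ ≤ K₂) : K₁ = K₂ :=
  eq_of_le_of_card_ge hle (by rw [← h₁.symm.index_eq_card, ← h₂.symm.index_eq_card])

theorem Normal.conj_smul_le_of_le {M L : Subgroup G} [L.Normal] (h : M ≤ L) (g : G) :
    MulAut.conj g • M ≤ L :=
  Normal.conj_smul_eq_self g L ▸ pointwise_smul_le_pointwise_smul_iff.mpr h

theorem map_conj_smul (f : G →* G') (g : G) (K : Subgroup G) :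
    (MulAut.conj g • K).map f = MulAut.conj (f g) • K.map f := by
  change (K.map (MulAut.conj g).toMonoidHom).map f = (K.map f).map (MulAut.conj (f g)).toMonoidHom
  rw [map_map, map_map]
  congr 1
  ext
  simp

theorem IsComplement'.conj_smul {N K : Subgroup G} [N.Normal] (h : IsComplement' N K) (g : G) :
    IsComplement' N (MulAut.conj g • K) := by
  rw [isComplement'_iff_disjoint_and_sup_eq_top] at h ⊢
  rw [disjoint_iff, ← Normal.conj_smul_eq_self g N, ← smul_inf, ← smul_sup, disjoint_iff.mp h.1,
    h.2, smul_bot]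
  simp

theorem IsComplement'.map_of_ker_le {N K : Subgroup G} [N.Normal] (h : IsComplement' N K)
    {f : G →* G'} (hf : Function.Surjective f) (hker : f.ker ≤ N) :
    IsComplement' (N.map f) (K.map f) := by
  have := Normal.map ‹N.Normal› f hf
  rw [isComplement'_iff_disjoint_and_sup_eq_top] at h ⊢
  refine ⟨disjoint_def.mpr ?_, by rw [← map_sup, h.2, map_top_of_surjective f hf]⟩
  rintro - hN ⟨k, hk, rfl⟩
  have hkN : k ∈ N := by simpa [← mem_comap, comap_map_eq, sup_of_le_left hker] using hN
  rw [disjoint_def.mp h.1 hkN hk, map_one]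

theorem IsComplement'.subgroupOf_sup {N K D : Subgroup G} [D.Normal] (h : IsComplement' N K)
    (hD : D ≤ N) : IsComplement' (D.subgroupOf (D ⊔ K)) (K.subgroupOf (D ⊔ K)) := by
  rw [isComplement'_iff_disjoint_and_sup_eq_top,
    ← Subgroup.subgroupOf_sup le_sup_left le_sup_right, subgroupOf_self]
  exact ⟨disjoint_def.mpr fun hxD hxK ↦ Subtype.ext (disjoint_def.mp h.disjoint (hD hxD) hxK), rfl⟩

theorem sup_eq_of_isComplement'_subgroupOf {L Q M : Subgroup G} (hQL : Q ≤ L) (hML : M ≤ L)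
    (h : IsComplement' (Q.subgroupOf L) (M.subgroupOf L)) : Q ⊔ M = L := by
  refine le_antisymm (sup_le hQL hML) ?_
  rw [← subgroupOf_eq_top, Subgroup.subgroupOf_sup hQL hML, h.sup_eq_top]

theorem IsComplement'.subgroupOf_conj_smul [Finite G] {L Q M : Subgroup G} [L.Normal]
    (hML : M ≤ L) (hM : IsComplement' (Q.subgroupOf L) (M.subgroupOf L))
    (hco : (Nat.card (Q.subgroupOf L)).Coprime (Q.subgroupOf L).index) (g : G) :
    IsComplement' (Q.subgroupOf L) ((MulAut.conj g • M).subgroupOf L) := by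
  have hcard : Nat.card ((MulAut.conj g • M).subgroupOf L) = Nat.card (M.subgroupOf L) := by
    rw [Nat.card_congr (subgroupOfEquivOfLe hML).toEquiv,
      Nat.card_congr (subgroupOfEquivOfLe (Normal.conj_smul_le_of_le hML g)).toEquiv,
      Nat.card_congr (equivSMul (MulAut.conj g) M).toEquiv]
  refine isComplement'_of_coprime (hcard ▸ hM.card_mul_card) ?_
  rwa [hcard, ← hM.symm.index_eq_card]

theorem commutator_lt_self_of_ne_bot {N : Subgroup G} [Group.IsSolvable N] (hN : N ≠ ⊥) :
    ⁅N, N⁆ < N := by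
  rw [← nontrivial_iff_ne_bot] at hN
  rw [← N.range_subtype, MonoidHom.range_eq_map, ← map_commutator, map_subtype_lt_map_subtype]
  exact Group.IsSolvable.commutator_lt_top_of_nontrivial N

instance isSolvable_subgroupOf {H K : Subgroup G} [Group.IsSolvable H] :
    Group.IsSolvable (H.subgroupOf K) :=
  Group.isSolvable_of_isSolvable_injective
    (f := (K.subtype.comp (H.subgroupOf K).subtype).codRestrict H fun x ↦ x.2)
    fun _ _ h ↦ Subtype.ext <| Subtype.ext <| congrArg (fun z : H ↦ (z : G)) h

/-- Each complement `K` of `N` is the stabilizer of its class in `N.QuotientDiff`, on which `N`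
acts transitively. -/
theorem IsComplement'.exists_conj_eq_of_isMulCommutative [Finite G] {N K₁ K₂ : Subgroup G}
    [N.Normal] [IsMulCommutative N] (hco : (Nat.card N).Coprime N.index)
    (h₁ : IsComplement' N K₁) (h₂ : IsComplement' N K₂) :
    ∃ g : G, MulAut.conj g • K₁ = K₂ := by
  let cls (K : Subgroup G) (hK : IsComplement' N K) : N.QuotientDiff :=
    Quotient.mk'' ⟨(K : Set G), hK.symm⟩
  have stabilizer_cls (K : Subgroup G) (hK : IsComplement' N K) :
      MulAction.stabilizer G (cls K hK) = K := by
    refine (hK.eq_of_le (isComplement'_stabilizer_of_coprime hco) fun k hk ↦ ?_).symm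
    exact congrArg Quotient.mk'' (Subtype.ext (op_smul_coe_set (K.inv_mem hk)))
  obtain ⟨n, hn⟩ := exists_smul_eq hco (cls K₁ h₁) (cls K₂ h₂)
  refine ⟨n, ?_⟩
  rw [← stabilizer_cls K₁ h₁, ← stabilizer_cls K₂ h₂, ← hn]
  exact (MulAction.stabilizer_smul_eq_stabilizer_map_conj (n : G) _).symm

theorem IsComplement'.exists_commutator_sup_conj_eq [Finite G] {N K₁ K₂ : Subgroup G}
    [N.Normal] (hco : (Nat.card N).Coprime N.index)
    (h₁ : IsComplement' N K₁) (h₂ : IsComplement' N K₂) :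
    ∃ g : G, ⁅N, N⁆ ⊔ MulAut.conj g • K₁ = ⁅N, N⁆ ⊔ K₂ := by
  let π := QuotientGroup.mk' ⁅N, N⁆
  have hπ : Function.Surjective π := QuotientGroup.mk'_surjective _
  have hker : π.ker ≤ N := (QuotientGroup.ker_mk' _).le.trans (commutator_le_left N N)
  have : IsMulCommutative (N.map π) := by
    rw [← commutator_self_eq_bot_iff, ← map_commutator, map_eq_bot_iff, QuotientGroup.ker_mk']
  have hco' : (Nat.card (N.map π)).Coprime (N.map π).index := by
    rw [N.index_map_eq hπ hker]
    exact Nat.Coprime.coprime_dvd_left (N.card_map_dvd π) hco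
  obtain ⟨g', hg'⟩ := (h₁.map_of_ker_le hπ hker).exists_conj_eq_of_isMulCommutative hco'
    (h₂.map_of_ker_le hπ hker)
  obtain ⟨g, rfl⟩ := hπ g'
  refine ⟨g, ?_⟩
  rw [sup_comm, sup_comm ⁅N, N⁆, ← QuotientGroup.ker_mk' ⁅N, N⁆, ← comap_map_eq, ← comap_map_eq,
    map_conj_smul, hg']

/-- Conjugacy part of the Schur–Zassenhaus theorem for solvable `N`: after a conjugation
making the complements agree modulo `D = ⁅N, N⁆`, both complement `D` in `D ⊔ K₂`, and induction on
`|N|` applies there. -/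
theorem IsComplement'.exists_conj_eq_of_isSolvable [Finite G] {N K₁ K₂ : Subgroup G}
    [N.Normal] [Group.IsSolvable N] (hco : (Nat.card N).Coprime N.index)
    (h₁ : IsComplement' N K₁) (h₂ : IsComplement' N K₂) :
    ∃ g : G, MulAut.conj g • K₁ = K₂ := by
  induction hn : Nat.card N using Nat.strong_induction_on generalizing G with
  | _ n ih =>
  obtain rfl | hN := eq_or_ne N ⊥
  · refine ⟨1, ?_⟩
    rw [isComplement'_bot_left.mp h₁, isComplement'_bot_left.mp h₂, map_one, one_smul]
  set D := ⁅N, N⁆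
  have hDN : D < N := commutator_lt_self_of_ne_bot hN
  obtain ⟨g, hS⟩ := h₁.exists_commutator_sup_conj_eq hco h₂
  have h₁' := (h₁.conj_smul g).subgroupOf_sup hDN.le
  have h₂' := h₂.subgroupOf_sup hDN.le
  rw [hS] at h₁'
  have hDcard : Nat.card (D.subgroupOf (D ⊔ K₂)) = Nat.card D :=
    Nat.card_congr (subgroupOfEquivOfLe le_sup_left).toEquiv
  have : Group.IsSolvable D := Group.isSolvable_of_isSolvable_injective (inclusion_injective hDN.le)
  have hDco : (Nat.card (D.subgroupOf (D ⊔ K₂))).Coprime (D.subgroupOf (D ⊔ K₂)).index := by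
    rw [hDcard, h₂'.symm.index_eq_card, Nat.card_congr (subgroupOfEquivOfLe le_sup_right).toEquiv,
      ← h₂.symm.index_eq_card]
    exact Nat.Coprime.coprime_dvd_left (card_dvd_of_le hDN.le) hco
  have hlt : Nat.card D < n :=
    hn ▸ lt_of_le_of_ne (card_le_of_le hDN.le) fun h ↦ hDN.ne (eq_of_le_of_card_ge hDN.le h.ge)
  obtain ⟨s, hs⟩ := ih _ hlt hDco h₁' h₂' hDcard
  have hle : MulAut.conj g • K₁ ≤ D ⊔ K₂ := hS ▸ le_sup_right
  rw [Subgroup.conj_smul_subgroupOf hle, subgroupOf_inj, inf_of_le_left (conj_smul_le_of_le hle s),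
    inf_of_le_left le_sup_right] at hs
  exact ⟨s * g, by rw [map_mul, mul_smul, hs]⟩

theorem normalizer_sup_eq_top_of_forall_conj {L K : Subgroup G}
    (h : ∀ g : G, ∃ l ∈ L, MulAut.conj g • K = MulAut.conj l • K) : normalizer K ⊔ L = ⊤ := by
  refine eq_top_iff.mpr fun g _ ↦ ?_
  obtain ⟨l, hl, hlg⟩ := h g
  have : l⁻¹ * g ∈ normalizer K := by
    rw [mem_normalizer_iff_map_conj_eq]
    change MulAut.conj (l⁻¹ * g) • K = K
    rw [map_mul, mul_smul, hlg, ← mul_smul, ← map_mul, inv_mul_cancel, map_one, one_smul]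
  simpa [sup_comm] using mul_mem_sup hl this

theorem sup_normalizer_eq_top_of_isComplement' [Finite G] {L Q M : Subgroup G} [L.Normal]
    [Q.Normal] [Group.IsSolvable Q] (hQL : Q ≤ L) (hML : M ≤ L)
    (hM : IsComplement' (Q.subgroupOf L) (M.subgroupOf L))
    (hco : (Nat.card (Q.subgroupOf L)).Coprime (Q.subgroupOf L).index) :
    Q ⊔ normalizer M = ⊤ := by
  have hconj (g : G) : ∃ l ∈ L, MulAut.conj g • M = MulAut.conj l • M := by
    obtain ⟨l, hl⟩ := hM.exists_conj_eq_of_isSolvable hco (hM.subgroupOf_conj_smul hML hco g)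
    rw [conj_smul_subgroupOf hML, subgroupOf_inj, inf_of_le_left (conj_smul_le_of_le hML l),
      inf_of_le_left (Normal.conj_smul_le_of_le hML g)] at hl
    exact ⟨l, l.2, hl.symm⟩
  refine eq_top_iff.mpr ?_
  rw [← normalizer_sup_eq_top_of_forall_conj hconj, ← sup_eq_of_isComplement'_subgroupOf hQL hML hM]
  exact sup_le le_sup_right (sup_le_sup_left le_normalizer _)

/-- By the modular law `P = Q ⊔ (P ⊓ N)`, and `Q` consists of non-generators of `P`. -/
theorem le_of_sup_eq_top_of_le_frattini {P Q N : Subgroup G} [Q.Normal]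
    [IsCoatomic (Subgroup P)] (hQ : Q ≤ (frattini P).map P.subtype) (hQN : Q ⊔ N = ⊤) :
    P ≤ N := by
  have hQP : Q ≤ P := hQ.trans (map_subtype_le _)
  rw [← subgroupOf_eq_top]
  refine frattini_nongenerating (eq_top_iff.mpr fun ⟨x, hx⟩ _ ↦ ?_)
  obtain ⟨n, hn, q, hq, rfl⟩ := mem_sup_of_normal_right.mp ((sup_comm Q N ▸ hQN) ▸ mem_top x)
  obtain ⟨q', hq', rfl⟩ := hQ hq
  have hnP : n ∈ P := (mul_mem_cancel_right (hQP hq)).mp hx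
  exact mul_mem_sup (T := frattini P) (show (⟨n, hnP⟩ : P) ∈ N.subgroupOf P from hn) hq'

theorem exists_normal_isComplement'_subgroupOf_of_le_frattini [Finite G] {P Q L : Subgroup G}
    [Q.Normal] [L.Normal] [Group.IsSolvable Q] (hQ : Q ≤ (frattini P).map P.subtype) (hQL : Q ≤ L)
    (hco : (Nat.card (Q.subgroupOf L)).Coprime (Q.subgroupOf L).index) :
    ∃ M : Subgroup G, M.Normal ∧ M ≤ L ∧ IsComplement' (Q.subgroupOf L) (M.subgroupOf L) := by
  obtain ⟨M₀, hM₀⟩ := exists_right_complement'_of_coprime hco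
  have hM : IsComplement' (Q.subgroupOf L) ((M₀.map L.subtype).subgroupOf L) := by
    rwa [← comap_map_eq_self_of_injective L.subtype_injective M₀] at hM₀
  have hQN := sup_normalizer_eq_top_of_isComplement' hQL (map_subtype_le M₀) hM hco
  have hPN := le_of_sup_eq_top_of_le_frattini hQ hQN
  refine ⟨_, normalizer_eq_top_iff.mp ?_, map_subtype_le M₀, hM⟩
  exact eq_top_iff.mpr (hQN ▸ sup_le ((hQ.trans (map_subtype_le _)).trans hPN) le_rfl)

theorem subgroupOf_le_map_frattini {P Q H : Subgroup G} (hPH : P ≤ H)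
    (hQ : Q ≤ (frattini P).map P.subtype) :
    Q.subgroupOf H ≤ (frattini (P.subgroupOf H)).map (P.subgroupOf H).subtype := by
  intro x hx
  obtain ⟨y, hy, hyx⟩ := hQ hx
  let e := subgroupOfEquivOfLe hPH
  have he : (frattini P).comap e.toMonoidHom = frattini (P.subgroupOf H) :=
    e.comapSubgroup.map_radical
  refine ⟨e.symm y, ?_, Subtype.ext hyx⟩
  rw [← he]
  simpa [e] using hy

theorem commutator_top_le_of_isComplement' {N K : Subgroup G} [N.Normal] [K.Normal]
    (h : IsComplement' N K) : ⁅(⊤ : Subgroup G), N⁆ ≤ ⁅N, N⁆ := by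
  rw [commutator_le]
  rintro g - x hx
  obtain ⟨u, hu, k, hk, rfl⟩ := mem_sup_of_normal_left.mp (h.sup_eq_top ▸ mem_top g)
  have hkx : k * x = x * k :=
    (commute_of_normal_of_disjoint N K ‹_› ‹_› h.disjoint x k hx hk).eq.symm
  have : ⁅u * k, x⁆ = ⁅u, x⁆ := by
    rw [commutatorElement_def, commutatorElement_def, mul_inv_rev, mul_assoc u, hkx]
    group
  rw [this]
  exact commutator_mem_commutator hu hx

end Subgroup

theorem QuotientGroup.normalizer_map_mk'_le_centralizer {G : Type*} [Group G]
    {P Q : Subgroup G} [Q.Normal] (hQP : Q ≤ P) (h : ⁅normalizer (P : Set G), P⁆ ≤ Q) :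
    normalizer (P.map (mk' Q) : Set (G ⧸ Q)) ≤ centralizer (P.map (mk' Q) : Set (G ⧸ Q)) := by
  intro x hx
  obtain ⟨m, rfl⟩ := mk'_surjective Q x
  have hm : m ∈ normalizer (P : Set G) := by
    have := le_normalizer_comap (mk' Q) hx
    rwa [Subgroup.comap_map_eq, ker_mk', sup_of_le_left hQP] at this
  rw [Subgroup.mem_centralizer_iff]
  rintro _ ⟨y, hy, rfl⟩
  have : mk' Q ⁅m, y⁆ = 1 := (eq_one_iff _).mpr (h (commutator_mem_commutator hm hy))
  rw [map_commutatorElement, commutatorElement_eq_one_iff_mul_comm] at this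
  exact this.symm

section

variable {p : ℕ} [Fact p.Prime] {G : Type*} [Group G] [Finite G]

namespace IsPNilpotent

theorem exists_isComplement' (h : IsPNilpotent p G) (P : Sylow p G) :
    ∃ K : Subgroup G, K.Normal ∧ IsComplement' P K := by
  obtain ⟨P₀, K, hK, hP₀K⟩ := h
  obtain ⟨g, rfl⟩ := MulAction.exists_smul_eq G P₀ P
  exact ⟨K, hK, (hP₀K.symm.conj_smul g).symm⟩

theorem of_sup_eq_top (P : Sylow p G) {K : Subgroup G} [K.Normal] (hK : ¬ p ∣ Nat.card K)
    (h : (P : Subgroup G) ⊔ K = ⊤) : IsPNilpotent p G := by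
  obtain ⟨n, hn⟩ := IsPGroup.iff_card.mp P.isPGroup'
  have hco : (Nat.card P).Coprime (Nat.card K) :=
    hn ▸ ((Nat.Prime.coprime_iff_not_dvd Fact.out).mpr hK).pow_left n
  refine ⟨P, K, ‹_›, ?_⟩
  exact (isComplement'_iff_disjoint_and_sup_eq_top.mpr
    ⟨(disjoint_of_coprime_natCard hco).symm, sup_comm K P ▸ h⟩).symm

theorem of_quotient_of_le_frattini (P : Sylow p G) {Q : Subgroup G} [Q.Normal]
    (hQ : Q ≤ (frattini P).map (P : Subgroup G).subtype) (h : IsPNilpotent p (G ⧸ Q)) :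
    IsPNilpotent p G := by
  have hQP : Q ≤ P := hQ.trans (map_subtype_le _)
  have hπ := QuotientGroup.mk'_surjective Q
  obtain ⟨K, hK, hPK⟩ := h.exists_isComplement' (P.mapSurjective hπ)
  set L := K.comap (QuotientGroup.mk' Q)
  have hQL : Q ≤ L := QuotientGroup.ker_mk' Q ▸ MonoidHom.ker_le_comap _ K
  have hidx : (Q.subgroupOf L).index = Nat.card K := by
    have : Q.subgroupOf L = ((QuotientGroup.mk' Q).comp L.subtype).ker := by
      ext; simp [mem_subgroupOf]
    rw [this, index_ker, MonoidHom.range_comp, range_subtype,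
      map_comap_eq_self_of_surjective hπ]
  have hpK : ¬ p ∣ Nat.card K := hPK.symm.index_eq_card ▸ (P.mapSurjective hπ).not_dvd_index
  have hpQ : IsPGroup p Q := P.isPGroup'.to_le hQP
  have := hpQ.isNilpotent
  have hco : (Nat.card (Q.subgroupOf L)).Coprime (Q.subgroupOf L).index := by
    obtain ⟨n, hn⟩ := IsPGroup.iff_card.mp (hpQ.of_equiv (subgroupOfEquivOfLe hQL).symm)
    rw [hn, hidx]
    exact ((Nat.Prime.coprime_iff_not_dvd Fact.out).mpr hpK).pow_left n
  obtain ⟨M, hMn, hML, hM⟩ := exists_normal_isComplement'_subgroupOf_of_le_frattini hQ hQL hco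
  refine of_sup_eq_top P (K := M) ?_ ?_
  · rwa [← Nat.card_congr (subgroupOfEquivOfLe hML).toEquiv, ← hM.symm.index_eq_card, hidx]
  have hPL : (P : Subgroup G) ⊔ L = ⊤ := by
    have hmap : ((P : Subgroup G) ⊔ L).map (QuotientGroup.mk' Q) = ⊤ := by
      rw [Subgroup.map_sup, map_comap_eq_self_of_surjective hπ]
      exact hPK.sup_eq_top
    rw [← comap_top (QuotientGroup.mk' Q), ← hmap, comap_map_eq, QuotientGroup.ker_mk',
      sup_of_le_left (hQP.trans le_sup_left)]
  rw [← hPL, ← sup_eq_of_isComplement'_subgroupOf hQL hML hM, ← sup_assoc, sup_of_le_left hQP]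

end IsPNilpotent

theorem Sylow.commutator_normalizer_le_of_isPNilpotent (P : Sylow p G)
    (h : IsPNilpotent p (normalizer ((P : Subgroup G) : Set G))) :
    ⁅normalizer ((P : Subgroup G) : Set G), (P : Subgroup G)⁆ ≤
      ⁅(P : Subgroup G), (P : Subgroup G)⁆ := by
  set R := normalizer ((P : Subgroup G) : Set G)
  let Pᵣ : Sylow p R := P.subtype le_normalizer
  have : (Pᵣ : Subgroup R).Normal := by
    rw [Sylow.coe_subtype]
    exact normal_in_normalizer
  obtain ⟨K, hK, hPK⟩ := h.exists_isComplement' Pᵣ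
  have hmap : (Pᵣ : Subgroup R).map R.subtype = P := by
    rw [Sylow.coe_subtype, subgroupOf_map_subtype, inf_of_le_left le_normalizer]
  have := map_mono (f := R.subtype) (commutator_top_le_of_isComplement' hPK)
  rwa [map_commutator, map_commutator, ← MonoidHom.range_eq_map, range_subtype, hmap] at this

theorem isPNilpotent_of_commutator_normalizer_le (P : Sylow p G) {Q : Subgroup G} [Q.Normal]
    (hQ : Q ≤ (frattini P).map (P : Subgroup G).subtype)
    (h : ⁅normalizer ((P : Subgroup G) : Set G), (P : Subgroup G)⁆ ≤ Q) : IsPNilpotent p G := by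
  refine IsPNilpotent.of_quotient_of_le_frattini P hQ ?_
  let S := P.mapSurjective (QuotientGroup.mk'_surjective Q)
  have hS : normalizer ((S : Subgroup (G ⧸ Q)) : Set (G ⧸ Q)) ≤ centralizer (S : Set (G ⧸ Q)) :=
    QuotientGroup.normalizer_map_mk'_le_centralizer (hQ.trans (map_subtype_le _)) h
  exact ⟨S, _, MonoidHom.normal_ker _, (MonoidHom.ker_transferSylow_isComplement' S hS).symm⟩

end

theorem navarro_pnilpotency (p : ℕ) [Fact p.Prime] (G : Type*) [Group G] [Finite G]
    (P : Sylow p G)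
    (hN : IsPNilpotent p (Subgroup.normalizer ((P : Subgroup G) : Set G)))
    (Q : Subgroup G)
    (hP' : (commutator ↥(P : Subgroup G)).map (P : Subgroup G).subtype ≤ Q)
    (hΦ : Q ≤ (frattini ↥(P : Subgroup G)).map (P : Subgroup G).subtype) :
    IsPNilpotent p (Subgroup.normalizer (Q : Set G)) := by
  rw [commutator_def, map_commutator, ← MonoidHom.range_eq_map, range_subtype] at hP'
  have hNP := (P.commutator_normalizer_le_of_isPNilpotent hN).trans hP'
  have hPH : (P : Subgroup G) ≤ normalizer (Q : Set G) :=
    le_normalizer_iff_commutator_le_right.mpr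
      ((commutator_mono le_rfl (hΦ.trans (map_subtype_le _))).trans hP')
  have : (Q.subgroupOf (normalizer (Q : Set G))).Normal := normal_in_normalizer
  refine isPNilpotent_of_commutator_normalizer_le (P.subtype hPH)
    (Q := Q.subgroupOf (normalizer (Q : Set G))) ?_ ?_
  · rw [Sylow.coe_subtype]
    exact subgroupOf_le_map_frattini hPH hΦ
  · rw [Sylow.coe_subtype, ← subgroupOf_normalizer_eq hPH, commutator_le]
    exact fun m hm y hy ↦ hNP (commutator_mem_commutator hm hy)
end

section
/- Let G be a finite group with Sylow p-subgroup P and let Q ⊴ G be a normal p-subgroup with P' ≤ Q. If N_G(P) is p-nilpotent, then P/Q is contained in the center of N_{G/Q}(P/Q). -/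
/-!
Write `N = N_G(P)`. As `P ⊴ N` is its only Sylow `p`-subgroup, `p`-nilpotency gives `N = P × K`
with `K ⊴ N`, so `K` centralizes `P` and `⁅P, N⁆ ≤ P' ≤ Q`. Since `Q ≤ P`, every element of
`N_{G/Q}(P/Q)` lifts to `N`, hence commutes with `P/Q`.
-/

open scoped commutatorElement

namespace Subgroup

variable {G : Type*} [Group G]

theorem commutatorElement_mem_commutator_self_of_isComplement' {H K : Subgroup G} [H.Normal]
    [K.Normal] (hHK : IsComplement' H K) {x : G} (hx : x ∈ H) (g : G) : ⁅x, g⁆ ∈ ⁅H, H⁆ := by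
  obtain ⟨y, hy, k, hk, rfl⟩ :=
    mem_sup_of_normal_left.mp (hHK.sup_eq_top.symm ▸ mem_top g : g ∈ H ⊔ K)
  have hxk : Commute x k := commute_of_normal_of_disjoint H K ‹_› ‹_› hHK.disjoint x k hx hk
  have hyk : ⁅x, y * k⁆ = ⁅x, y⁆ := by
    rw [commutatorElement_def, commutatorElement_def,
      show x * (y * k) * x⁻¹ * (y * k)⁻¹ = x * y * (k * x⁻¹) * k⁻¹ * y⁻¹ by group,
      ← hxk.inv_left.eq]
    group
  exact hyk ▸ commutator_mem_commutator hx hy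

theorem comap_normalizer_map_of_surjective {N : Type*} [Group N] {f : G →* N}
    (hf : Function.Surjective f) {H : Subgroup G} (hH : f.ker ≤ H) :
    (normalizer (H.map f : Set N)).comap f = normalizer (H : Set G) := by
  rw [comap_normalizer_eq_of_surjective _ hf, comap_map_eq_self hH]

end Subgroup

open Subgroup

section

variable {p : ℕ} [Fact p.Prime] {G : Type*} [Group G] [Finite G]

theorem IsPNilpotent.exists_isComplement'_s2 (hG : IsPNilpotent p G) (P : Sylow p G)
    [(P : Subgroup G).Normal] : ∃ K : Subgroup G, K.Normal ∧ IsComplement' (P : Subgroup G) K := by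
  obtain ⟨P', K, hK, hP'K⟩ := hG
  have : Unique (Sylow p G) := Sylow.unique_of_normal P ‹_›
  exact ⟨K, hK, Subsingleton.elim P' P ▸ hP'K⟩

theorem Sylow.commutatorElement_mem_commutator_of_mem_normalizer (P : Sylow p G)
    (hN : IsPNilpotent p (normalizer ((P : Subgroup G) : Set G))) {x g : G} (hx : x ∈ P)
    (hg : g ∈ normalizer ((P : Subgroup G) : Set G)) :
    ⁅x, g⁆ ∈ ⁅(P : Subgroup G), (P : Subgroup G)⁆ := by
  set N := normalizer ((P : Subgroup G) : Set G)
  have hPN : (P : Subgroup G) ≤ N := le_normalizer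
  have : ((P.subtype hPN : Sylow p N) : Subgroup N).Normal := by
    rw [Sylow.coe_subtype]; exact normal_in_normalizer
  obtain ⟨K, hK, hPK⟩ := hN.exists_isComplement'_s2 (P.subtype hPN)
  have hxN : (⟨x, hPN hx⟩ : N) ∈ (P.subtype hPN : Subgroup N) := by
    rw [Sylow.coe_subtype]; exact hx
  have := mem_map_of_mem N.subtype
    (commutatorElement_mem_commutator_self_of_isComplement' hPK hxN ⟨g, hg⟩)
  rwa [map_commutator, Sylow.coe_subtype, subgroupOf_map_subtype, inf_of_le_left hPN,
    map_commutatorElement] at this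

end

theorem image_central_in_normalizer_general (p : ℕ) [Fact p.Prime] (G : Type*) [Group G] [Finite G]
    (P : Sylow p G) (Q : Subgroup G) (hQ : Q.Normal)
    (hQP : Q ≤ (P : Subgroup G))
    (hP' : (commutator ↥(P : Subgroup G)).map (P : Subgroup G).subtype ≤ Q)
    (hN : IsPNilpotent p (Subgroup.normalizer ((P : Subgroup G) : Set G))) :
    (P : Subgroup G).map (QuotientGroup.mk' Q) ≤
      Subgroup.centralizer ((Subgroup.normalizer (((P : Subgroup G).map (QuotientGroup.mk' Q)) : Set (G ⧸ Q))) : Set (G ⧸ Q)) := by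
  rintro _ ⟨x, hx, rfl⟩
  rw [mem_centralizer_iff]
  intro b hb
  obtain ⟨g, rfl⟩ := QuotientGroup.mk'_surjective Q b
  have hg : g ∈ normalizer ((P : Subgroup G) : Set G) := by
    rw [← comap_normalizer_map_of_surjective (QuotientGroup.mk'_surjective Q)
      (by rwa [QuotientGroup.ker_mk'])]
    exact hb
  have hxg : ⁅x, g⁆ ∈ Q := by
    rw [map_subtype_commutator] at hP'
    exact hP' (P.commutatorElement_mem_commutator_of_mem_normalizer hN hx hg)
  have hcomm : ⁅QuotientGroup.mk' Q x, QuotientGroup.mk' Q g⁆ = 1 := by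
    rwa [← map_commutatorElement, QuotientGroup.mk'_apply, QuotientGroup.eq_one_iff]
  exact (commutatorElement_eq_one_iff_commute.mp hcomm).eq.symm

theorem image_central_in_normalizer (p : ℕ) [Fact p.Prime] (G : Type*) [Group G] [Finite G]
    (P : Sylow p G) (Q : Subgroup G) (hQ : Q.Normal) (hQp : IsPGroup p Q)
    (hQP : Q ≤ (P : Subgroup G))
    (hP' : (commutator ↥(P : Subgroup G)).map (P : Subgroup G).subtype ≤ Q)
    (hN : IsPNilpotent p (Subgroup.normalizer ((P : Subgroup G) : Set G))) :
    (P : Subgroup G).map (QuotientGroup.mk' Q) ≤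
      Subgroup.centralizer ((Subgroup.normalizer (((P : Subgroup G).map (QuotientGroup.mk' Q)) : Set (G ⧸ Q))) : Set (G ⧸ Q)) :=
  image_central_in_normalizer_general p G P Q hQ hQP hP' hN
end

section
/- Let G be a finite group with Sylow p-subgroup P, and suppose K ⊴ G with G = PK and P ∩ K = Q where Q ≤ Φ(P) and Q ⊴ G. If L ≤ K is a complement to Q in K (K = QL, Q ∩ L = 1) with N_P(L)·Q = P, then L is normal in G and is a normal p-complement for G. -/
/-!
Since `Q` lies in the Frattini subgroup of `P` and is non-generating there, `N_P(L) Q = P` forces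
`N_P(L) = P`. Thus `L` is normalized by `P` and by `K = QL`, hence by `PK = G`. The complement
properties are pure lattice bookkeeping: `PL = PQL = PK` and `P ∩ L = P ∩ K ∩ L = Q ∩ L`.
-/

theorem IsCompl.of_sup_eq_top_of_inf_eq {α : Type*} [Lattice α] [BoundedOrder α] {a b c d : α}
    (hab : a ⊔ b = ⊤) (hab_inf : a ⊓ b = c) (hcd : c ⊔ d = b) (hcd_inf : c ⊓ d = ⊥) :
    IsCompl a d := by
  have hca : c ≤ a := hab_inf ▸ inf_le_left
  have hdb : d ≤ b := hcd ▸ le_sup_right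
  constructor
  · rw [disjoint_iff, ← hcd_inf, ← hab_inf, inf_assoc, inf_eq_right.mpr hdb]
  · rw [codisjoint_iff, ← hab, ← hcd, ← sup_assoc, sup_eq_left.mpr hca]

namespace Subgroup

variable {G : Type*} [Group G]

theorem eq_of_sup_eq_of_le_map_frattini {H A Q : Subgroup G} [IsCoatomic (Subgroup H)]
    (hAQ : A ⊔ Q = H) (hQ : Q ≤ (frattini H).map H.subtype) : A = H := by
  have hAH : A ≤ H := hAQ ▸ le_sup_left
  have hQH : Q ≤ H := hAQ ▸ le_sup_right
  have hQΦ : Q.subgroupOf H ≤ frattini H := fun x hx ↦ by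
    obtain ⟨y, hy, hyx⟩ := hQ hx
    rwa [← Subtype.ext hyx]
  have hgen : A.subgroupOf H ⊔ frattini H = ⊤ := by
    refine top_le_iff.mp (le_trans ?_ (sup_le_sup_left hQΦ _))
    rw [← subgroupOf_sup hAH hQH, hAQ, subgroupOf_self]
  have htop : A.subgroupOf H = ⊤ := frattini_nongenerating hgen
  exact le_antisymm hAH ((subgroupOf_eq_top).mp htop)

end Subgroup

open Subgroup in
theorem complement_is_normal_p_complement_general (p : ℕ) (G : Type*) [Group G] [Finite G]
    (P : Sylow p G) (K Q L : Subgroup G)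
    (hPK : (P : Subgroup G) ⊔ K = ⊤) (hPcapK : (P : Subgroup G) ⊓ K = Q)
    (hQΦ : Q ≤ (frattini ↥(P : Subgroup G)).map (P : Subgroup G).subtype)
    (hQL : Q ⊔ L = K) (hQcapL : Q ⊓ L = ⊥)
    (hNPL : ((P : Subgroup G) ⊓ Subgroup.normalizer (L : Set G)) ⊔ Q = (P : Subgroup G)) :
    L.Normal ∧ (P : Subgroup G) ⊔ L = ⊤ ∧ (P : Subgroup G) ⊓ L = ⊥ := by
  have hQP : Q ≤ P := hPcapK ▸ inf_le_left
  have hPN : (P : Subgroup G) ≤ normalizer (L : Set G) :=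
    (eq_of_sup_eq_of_le_map_frattini hNPL hQΦ).ge.trans inf_le_right
  have hKN : K ≤ normalizer (L : Set G) := hQL ▸ sup_le (hQP.trans hPN) le_normalizer
  have hPL : IsCompl (P : Subgroup G) L := .of_sup_eq_top_of_inf_eq hPK hPcapK hQL hQcapL
  refine ⟨?_, hPL.sup_eq_top, hPL.inf_eq_bot⟩
  rw [← normalizer_eq_top_iff]
  exact top_le_iff.mp (hPK ▸ sup_le hPN hKN)

theorem complement_is_normal_p_complement (p : ℕ) [Fact p.Prime] (G : Type*) [Group G] [Finite G]
    (P : Sylow p G) (K Q L : Subgroup G)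
    (hK : K.Normal) (hPK : (P : Subgroup G) ⊔ K = ⊤) (hPcapK : (P : Subgroup G) ⊓ K = Q)
    (hQΦ : Q ≤ (frattini ↥(P : Subgroup G)).map (P : Subgroup G).subtype) (hQ : Q.Normal)
    (hLK : L ≤ K) (hQL : Q ⊔ L = K) (hQcapL : Q ⊓ L = ⊥)
    (hNPL : ((P : Subgroup G) ⊓ Subgroup.normalizer (L : Set G)) ⊔ Q = (P : Subgroup G)) :
    L.Normal ∧ (P : Subgroup G) ⊔ L = ⊤ ∧ (P : Subgroup G) ⊓ L = ⊥ :=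
  complement_is_normal_p_complement_general p G P K Q L hPK hPcapK hQΦ hQL hQcapL hNPL
end
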